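/- Under assumptions (H1) and (H2) with 0 < κ < 1, there exists a constant L, depending only on κ, τ, r₀ and sup_{P∈D}|P|, such that every near field refractor ρ : Ω̄ → (0, r₀] is Lipschitz continuous on Ω̄ with Lipschitz constant L: |ρ(x) − ρ(y)| ≤ L|x − y| for all x, y ∈ Ω̄. -/

import Mathlib

/-! At each point `v` the refractor lies below a supporting oval touching it there, so
`ρ u - ρ v ≤ h(u) - h(v)`, and `h(x,P,b)` depends on `x` only through `t = x·P`. The
discriminant is at least `κ²(|P| - b)²` on `[b, |P|]`, so the square root in `h` is Lipschitz in
`t` and `h` has Lipschitz constant `(κ² + κ|P|/(|P| - b))/(1 - κ²)` in `t`. The gap `|P| - b` is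
bounded below because `b - κ|P| ≤ h(v) = ρ v ≤ r₀ ≤ τ|P|/(1 + κ)` and `τ ≤ 1 - κ`; this bounds the
constant by `2/(1 - κ)²`, and `|u·P - v·P| ≤ M‖u - v‖` gives `L = 2M/(1 - κ)²`. -/

open MeasureTheory
open scoped RealInnerProductSpace

/-- The discriminant `Δ(t) = (b − κ²t)² − (1 − κ²)(b² − κ²|P|²)` of the quadratic equation
defining the polar radius of the Cartesian oval `|X| + κ|X − P| = b` (case `κ < 1`). -/
noncomputable def ovalDelta (κ b normP t : ℝ) : ℝ :=
  (b - κ ^ 2 * t) ^ 2 - (1 - κ ^ 2) * (b ^ 2 - κ ^ 2 * normP ^ 2)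

/-- The polar radius `h(x,P,b)` of the refracting Cartesian oval (case `κ < 1`). -/
noncomputable def ovalH {n : ℕ} (κ b : ℝ) (P x : EuclideanSpace ℝ (Fin n)) : ℝ :=
  ((b - κ ^ 2 * ⟪x, P⟫) - Real.sqrt (ovalDelta κ b ‖P‖ ⟪x, P⟫)) / (1 - κ ^ 2)

/-- Surface measure on the unit sphere of `ℝⁿ`: the `(n−1)`-dimensional Hausdorff measure
restricted to the sphere. -/
noncomputable def sphereMeasure (n : ℕ) : Measure (EuclideanSpace ℝ (Fin n)) :=
  (μH[(n : ℝ) - 1] : Measure (EuclideanSpace ℝ (Fin n))).restrict (Metric.sphere 0 1)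

/-- The cone `Q_{r₀} = {tx : x ∈ Ω̄, 0 < t ≤ r₀}`. -/
def coneQ {n : ℕ} (Ω : Set (EuclideanSpace ℝ (Fin n))) (r₀ : ℝ) :
    Set (EuclideanSpace ℝ (Fin n)) :=
  {Z | ∃ x ∈ closure Ω, ∃ t : ℝ, 0 < t ∧ t ≤ r₀ ∧ Z = t • x}

/-- The oval `O(P,b)` supports the surface given by the radial function `ρ` at the point
`ρ(y)y` (case `κ < 1`): `κ|P| < b < |P|`, `x·P ≥ b` on `Ω̄`, `ρ ≤ h(·,P,b)` on `Ω̄` with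
equality at `y`. -/
def SupportsAtLt {n : ℕ} (κ : ℝ) (Ω : Set (EuclideanSpace ℝ (Fin n)))
    (ρ : EuclideanSpace ℝ (Fin n) → ℝ) (P : EuclideanSpace ℝ (Fin n)) (b : ℝ)
    (y : EuclideanSpace ℝ (Fin n)) : Prop :=
  κ * ‖P‖ < b ∧ b < ‖P‖ ∧ (∀ x ∈ closure Ω, b ≤ ⟪x, P⟫) ∧
    (∀ x ∈ closure Ω, ρ x ≤ ovalH κ b P x) ∧ ρ y = ovalH κ b P y

/-- Near field refractor for `κ < 1` (Definition 5.1): a continuous radial function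
`ρ : Ω̄ → (0, r₀]` such that at every point there is a supporting oval with focus in `D`. -/
def IsNearFieldRefractorLt {n : ℕ} (κ r₀ : ℝ) (Ω D : Set (EuclideanSpace ℝ (Fin n)))
    (ρ : EuclideanSpace ℝ (Fin n) → ℝ) : Prop :=
  ContinuousOn ρ (closure Ω) ∧ (∀ x ∈ closure Ω, 0 < ρ x ∧ ρ x ≤ r₀) ∧
    ∀ y ∈ closure Ω, ∃ P ∈ D, ∃ b : ℝ, SupportsAtLt κ Ω ρ P b y

/-- The near field refractor map `R_S(x)` (case `κ < 1`). -/
def refractorMapLt {n : ℕ} (κ : ℝ) (Ω D : Set (EuclideanSpace ℝ (Fin n)))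
    (ρ : EuclideanSpace ℝ (Fin n) → ℝ) (x : EuclideanSpace ℝ (Fin n)) :
    Set (EuclideanSpace ℝ (Fin n)) :=
  {P | P ∈ D ∧ ∃ b : ℝ, SupportsAtLt κ Ω ρ P b x}

/-- `R_S⁻¹(F) = {x ∈ Ω̄ : R_S(x) ∩ F ≠ ∅}` (case `κ < 1`). -/
def refractorPreimageLt {n : ℕ} (κ : ℝ) (Ω D : Set (EuclideanSpace ℝ (Fin n)))
    (ρ : EuclideanSpace ℝ (Fin n) → ℝ) (F : Set (EuclideanSpace ℝ (Fin n))) :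
    Set (EuclideanSpace ℝ (Fin n)) :=
  {x | x ∈ closure Ω ∧ (refractorMapLt κ Ω D ρ x ∩ F).Nonempty}

theorem Real.abs_sqrt_sub_sqrt_le {x y c : ℝ} (hc : 0 < c) (hx : c ^ 2 ≤ x) (hy : c ^ 2 ≤ y) :
    |√x - √y| ≤ |x - y| / (2 * c) := by
  have hcx : c ≤ √x := Real.le_sqrt_of_sq_le hx
  have hcy : c ≤ √y := Real.le_sqrt_of_sq_le hy
  have hdiff : x - y = (√x + √y) * (√x - √y) := by
    rw [← sq_sub_sq, Real.sq_sqrt (by nlinarith), Real.sq_sqrt (by nlinarith)]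
  rw [le_div_iff₀ (by positivity), hdiff, abs_mul, abs_of_pos (by linarith : 0 < √x + √y),
    mul_comm]
  gcongr
  linarith

noncomputable def ovalRadius (κ b p t : ℝ) : ℝ :=
  ((b - κ ^ 2 * t) - √(ovalDelta κ b p t)) / (1 - κ ^ 2)

theorem ovalH_eq_ovalRadius {n : ℕ} (κ b : ℝ) (P x : EuclideanSpace ℝ (Fin n)) :
    ovalH κ b P x = ovalRadius κ b ‖P‖ ⟪x, P⟫ :=
  rfl

section OvalRadius

variable {κ b p s t : ℝ}

theorem ovalDelta_sub_ovalDelta (κ b p s t : ℝ) :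
    ovalDelta κ b p s - ovalDelta κ b p t = κ ^ 2 * (t - s) * (2 * b - κ ^ 2 * (s + t)) := by
  unfold ovalDelta; ring

theorem ovalDelta_self (κ b p : ℝ) : ovalDelta κ b p p = (κ * (p - b)) ^ 2 := by
  unfold ovalDelta; ring

theorem sq_mul_add_le_two_mul (hκ0 : 0 ≤ κ) (hκ1 : κ ≤ 1) (hp : 0 ≤ p) (hb : κ * p ≤ b)
    (hs : s ≤ p) (ht : t ≤ p) : κ ^ 2 * (s + t) ≤ 2 * b := by
  have hb0 : 0 ≤ b := (mul_nonneg hκ0 hp).trans hb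
  nlinarith [mul_le_mul_of_nonneg_left hb hκ0,
    mul_le_mul_of_nonneg_left (add_le_add hs ht) (sq_nonneg κ), mul_nonneg (sub_nonneg.2 hκ1) hb0]

theorem sq_mul_sub_le_ovalDelta (hκ0 : 0 ≤ κ) (hκ1 : κ ≤ 1) (hp : 0 ≤ p) (hb : κ * p ≤ b)
    (ht : t ≤ p) : (κ * (p - b)) ^ 2 ≤ ovalDelta κ b p t := by
  have hdiff := ovalDelta_sub_ovalDelta κ b p t p
  rw [ovalDelta_self] at hdiff
  have := sq_mul_add_le_two_mul hκ0 hκ1 hp hb ht le_rfl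
  nlinarith [mul_nonneg (mul_nonneg (sq_nonneg κ) (sub_nonneg.2 ht)) (sub_nonneg.2 this)]

theorem abs_ovalDelta_sub_le (hκ0 : 0 ≤ κ) (hκ1 : κ ≤ 1) (hp : 0 ≤ p) (hb : κ * p ≤ b)
    (hs : b ≤ s) (hs' : s ≤ p) (ht : b ≤ t) (ht' : t ≤ p) :
    |ovalDelta κ b p s - ovalDelta κ b p t| ≤ 2 * p * κ ^ 2 * |s - t| := by
  have hb0 : 0 ≤ b := (mul_nonneg hκ0 hp).trans hb
  have hweight : 0 ≤ 2 * b - κ ^ 2 * (s + t) :=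
    sub_nonneg.2 (sq_mul_add_le_two_mul hκ0 hκ1 hp hb hs' ht')
  have hweight' : 2 * b - κ ^ 2 * (s + t) ≤ 2 * p := by nlinarith [sq_nonneg κ]
  rw [ovalDelta_sub_ovalDelta, abs_mul, abs_mul, abs_of_nonneg (sq_nonneg κ),
    abs_of_nonneg hweight, abs_sub_comm t s]
  calc κ ^ 2 * |s - t| * (2 * b - κ ^ 2 * (s + t)) ≤ κ ^ 2 * |s - t| * (2 * p) := by gcongr
    _ = 2 * p * κ ^ 2 * |s - t| := by ring

theorem abs_ovalRadius_sub_le (hκ0 : 0 < κ) (hκ1 : κ < 1) (hb : κ * p < b) (hbp : b < p)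
    (hs : b ≤ s) (hs' : s ≤ p) (ht : b ≤ t) (ht' : t ≤ p) :
    |ovalRadius κ b p s - ovalRadius κ b p t|
      ≤ (κ ^ 2 + κ * p / (p - b)) / (1 - κ ^ 2) * |s - t| := by
  have hp : 0 < p := by nlinarith
  have hc : 0 < κ * (p - b) := mul_pos hκ0 (sub_pos.2 hbp)
  have hsqrt : |√(ovalDelta κ b p s) - √(ovalDelta κ b p t)| ≤ κ * p / (p - b) * |s - t| :=
    calc _ ≤ |ovalDelta κ b p s - ovalDelta κ b p t| / (2 * (κ * (p - b))) :=
          Real.abs_sqrt_sub_sqrt_le hc (sq_mul_sub_le_ovalDelta hκ0.le hκ1.le hp.le hb.le hs')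
            (sq_mul_sub_le_ovalDelta hκ0.le hκ1.le hp.le hb.le ht')
      _ ≤ 2 * p * κ ^ 2 * |s - t| / (2 * (κ * (p - b))) := by
          gcongr; exact abs_ovalDelta_sub_le hκ0.le hκ1.le hp.le hb.le hs hs' ht ht'
      _ = κ * p / (p - b) * |s - t| := by field_simp
  have hκ2 : 0 < 1 - κ ^ 2 := by nlinarith
  have hsplit : ovalRadius κ b p s - ovalRadius κ b p t
      = (κ ^ 2 * (t - s) - (√(ovalDelta κ b p s) - √(ovalDelta κ b p t))) / (1 - κ ^ 2) := by
    unfold ovalRadius; ring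
  rw [hsplit, abs_div, abs_of_pos hκ2, div_mul_eq_mul_div]
  gcongr
  calc _ ≤ |κ ^ 2 * (t - s)| + |√(ovalDelta κ b p s) - √(ovalDelta κ b p t)| := abs_sub _ _
    _ ≤ κ ^ 2 * |s - t| + κ * p / (p - b) * |s - t| := by
        rw [abs_mul, abs_of_nonneg (sq_nonneg κ), abs_sub_comm t s]; gcongr
    _ = (κ ^ 2 + κ * p / (p - b)) * |s - t| := by ring

theorem sub_mul_le_ovalRadius (hκ0 : 0 < κ) (hκ1 : κ < 1) (hb : κ * p ≤ b) (ht : b ≤ t)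
    (ht' : t ≤ p) : b - κ * p ≤ ovalRadius κ b p t := by
  have hκ2 : 0 < 1 - κ ^ 2 := by nlinarith
  set R := b - κ ^ 2 * t - (1 - κ ^ 2) * (b - κ * p)
  have hR : 0 ≤ R := by nlinarith
  have hΔ : ovalDelta κ b p t ≤ R ^ 2 := by
    have : R ^ 2 - ovalDelta κ b p t
        = (1 - κ ^ 2) * (b - κ * p) * (κ ^ 2 * (2 * t - b + κ * p)) := by
      unfold ovalDelta R; ring
    nlinarith [mul_nonneg (mul_nonneg hκ2.le (sub_nonneg.2 hb))
      (mul_nonneg (sq_nonneg κ) (by nlinarith : (0 : ℝ) ≤ 2 * t - b + κ * p))]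
  have hsqrt : √(ovalDelta κ b p t) ≤ R := Real.sqrt_le_iff.2 ⟨hR, hΔ⟩
  rw [ovalRadius, le_div_iff₀ hκ2]
  linarith

theorem ovalRadius_lipschitzConst_le (hκ0 : 0 ≤ κ) (hκ1 : κ < 1) (hbp : b < p)
    (hb : (1 + κ) * (b - κ * p) ≤ (1 - κ) * p) :
    (κ ^ 2 + κ * p / (p - b)) / (1 - κ ^ 2) ≤ 2 / (1 - κ) ^ 2 := by
  have h1κ : 0 < 1 - κ := sub_pos.2 hκ1
  have hκsq : κ ^ 2 ≤ 1 := by nlinarith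
  have hκ2 : 0 < 1 - κ ^ 2 := by nlinarith
  have hfrac : κ * p / (p - b) ≤ (1 + κ) / (1 - κ) := by
    rw [div_le_div_iff₀ (sub_pos.2 hbp) h1κ]; nlinarith
  calc _ ≤ (1 + (1 + κ) / (1 - κ)) / (1 - κ ^ 2) := by gcongr
    _ = 2 / ((1 - κ) ^ 2 * (1 + κ)) := by field_simp; ring
    _ ≤ 2 / (1 - κ) ^ 2 := by
        gcongr; exact le_mul_of_one_le_right (sq_nonneg _) (by linarith)

end OvalRadius

section Refractor

variable {n : ℕ} {κ b : ℝ} {Ω D : Set (EuclideanSpace ℝ (Fin n))}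
  {ρ : EuclideanSpace ℝ (Fin n) → ℝ} {P u v : EuclideanSpace ℝ (Fin n)}

theorem inner_le_norm_of_mem_closure (hΩ : Ω ⊆ Metric.sphere 0 1) (hu : u ∈ closure Ω)
    (P : EuclideanSpace ℝ (Fin n)) : ⟪u, P⟫ ≤ ‖P‖ := by
  have hu1 : ‖u‖ = 1 :=
    mem_sphere_zero_iff_norm.1 (closure_minimal hΩ Metric.isClosed_sphere hu)
  simpa [hu1] using real_inner_le_norm u P

theorem SupportsAtLt.sub_mul_norm_le (h : SupportsAtLt κ Ω ρ P b v) (hκ0 : 0 < κ) (hκ1 : κ < 1)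
    (hΩ : Ω ⊆ Metric.sphere 0 1) (hv : v ∈ closure Ω) : b - κ * ‖P‖ ≤ ρ v := by
  rw [h.2.2.2.2, ovalH_eq_ovalRadius]
  exact sub_mul_le_ovalRadius hκ0 hκ1 h.1.le (h.2.2.1 v hv)
    (inner_le_norm_of_mem_closure hΩ hv P)

theorem SupportsAtLt.sub_le (h : SupportsAtLt κ Ω ρ P b v) (hκ0 : 0 < κ) (hκ1 : κ < 1)
    (hΩ : Ω ⊆ Metric.sphere 0 1) (hu : u ∈ closure Ω) (hv : v ∈ closure Ω) :
    ρ u - ρ v ≤ (κ ^ 2 + κ * ‖P‖ / (‖P‖ - b)) / (1 - κ ^ 2) * ‖P‖ * ‖u - v‖ := by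
  obtain ⟨hb, hbP, hbΩ, hρle, hρv⟩ := h
  calc ρ u - ρ v ≤ ovalH κ b P u - ovalH κ b P v := by rw [hρv]; linarith [hρle u hu]
    _ ≤ (κ ^ 2 + κ * ‖P‖ / (‖P‖ - b)) / (1 - κ ^ 2) * |⟪u, P⟫ - ⟪v, P⟫| :=
        (le_abs_self _).trans <| abs_ovalRadius_sub_le hκ0 hκ1 hb hbP (hbΩ u hu)
          (inner_le_norm_of_mem_closure hΩ hu P) (hbΩ v hv) (inner_le_norm_of_mem_closure hΩ hv P)
    _ ≤ (κ ^ 2 + κ * ‖P‖ / (‖P‖ - b)) / (1 - κ ^ 2) * (‖u - v‖ * ‖P‖) := by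
        have : 0 < ‖P‖ - b := sub_pos.2 hbP
        have : 0 < 1 - κ ^ 2 := by nlinarith
        gcongr
        rw [← inner_sub_left]
        exact abs_real_inner_le_norm _ _
    _ = _ := by ring

theorem IsNearFieldRefractorLt.sub_le {τ r₀ M : ℝ} (hρ : IsNearFieldRefractorLt κ r₀ Ω D ρ)
    (hκ0 : 0 < κ) (hκ1 : κ < 1) (hτ0 : 0 ≤ τ) (hτ : τ ≤ 1 - κ) (hΩ : Ω ⊆ Metric.sphere 0 1)
    (hDM : ∀ P ∈ D, ‖P‖ ≤ M) (hr₀ : r₀ ≤ τ / (1 + κ) * Metric.infDist 0 D)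
    (hu : u ∈ closure Ω) (hv : v ∈ closure Ω) :
    ρ u - ρ v ≤ 2 / (1 - κ) ^ 2 * M * ‖u - v‖ := by
  obtain ⟨P, hPD, b, hsupp⟩ := hρ.2.2 v hv
  have hgap : (1 + κ) * (b - κ * ‖P‖) ≤ (1 - κ) * ‖P‖ :=
    calc (1 + κ) * (b - κ * ‖P‖) ≤ (1 + κ) * r₀ := by
          gcongr; exact (hsupp.sub_mul_norm_le hκ0 hκ1 hΩ hv).trans (hρ.2.1 v hv).2
      _ ≤ τ * Metric.infDist 0 D := by
          rwa [div_mul_eq_mul_div, le_div_iff₀' (by linarith)] at hr₀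
      _ ≤ τ * ‖P‖ := by
          gcongr; simpa using Metric.infDist_le_dist_of_mem (x := 0) hPD
      _ ≤ (1 - κ) * ‖P‖ := by gcongr
  calc ρ u - ρ v ≤ (κ ^ 2 + κ * ‖P‖ / (‖P‖ - b)) / (1 - κ ^ 2) * ‖P‖ * ‖u - v‖ :=
        hsupp.sub_le hκ0 hκ1 hΩ hu hv
    _ ≤ 2 / (1 - κ) ^ 2 * M * ‖u - v‖ := by
        gcongr ?_ * ?_ * _
        · exact ovalRadius_lipschitzConst_le hκ0.le hκ1 hsupp.2.1 hgap
        · exact hDM P hPD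

end Refractor

theorem stmt14_general (κ τ r₀ M : ℝ) (hκ0 : 0 < κ) (hκ1 : κ < 1) (hτ0 : 0 < τ) (hττ : τ < 1 - κ) :
    ∃ L : ℝ, ∀ (n : ℕ), 2 ≤ n → ∀ Ω D : Set (EuclideanSpace ℝ (Fin n)),
      -- Ω is a domain in the unit sphere
      Ω ⊆ Metric.sphere 0 1 →
      (∃ U : Set (EuclideanSpace ℝ (Fin n)), IsOpen U ∧ Ω = U ∩ Metric.sphere 0 1) →
      -- D is compact, 0 ∉ D, with sup_{P ∈ D} |P| ≤ M
      IsCompact D → D.Nonempty → (0 : EuclideanSpace ℝ (Fin n)) ∉ D →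
      (∀ P ∈ D, ‖P‖ ≤ M) →
      -- (H1)
      (∀ x ∈ closure Ω, ∀ P ∈ D, (κ + τ) * ‖P‖ ≤ ⟪x, P⟫) →
      -- (H2)
      r₀ ≤ τ / (1 + κ) * Metric.infDist 0 D →
      (∀ X ∈ coneQ Ω r₀, ∀ m : EuclideanSpace ℝ (Fin n), ‖m‖ = 1 →
        (D ∩ {Z | ∃ t : ℝ, 0 ≤ t ∧ Z = X + t • m}).Subsingleton) →
      -- conclusion: uniform Lipschitz bound
      ∀ ρ : EuclideanSpace ℝ (Fin n) → ℝ, IsNearFieldRefractorLt κ r₀ Ω D ρ →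
        ∀ x ∈ closure Ω, ∀ y ∈ closure Ω, |ρ x - ρ y| ≤ L * ‖x - y‖ := by
  refine ⟨2 / (1 - κ) ^ 2 * M, fun n _ Ω D hΩ _ _ _ _ hDM _ hr₀ _ ρ hρ x hx y hy => ?_⟩
  have hsub : ∀ u ∈ closure Ω, ∀ v ∈ closure Ω,
      ρ u - ρ v ≤ 2 / (1 - κ) ^ 2 * M * ‖u - v‖ := fun u hu v hv => hρ.sub_le hκ0 hκ1 hτ0.le hττ.le hΩ hDM hr₀ hu hv
  rw [abs_sub_le_iff, ← norm_sub_rev y x]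
  exact ⟨norm_sub_rev y x ▸ hsub x hx y hy, hsub y hy x hx⟩

/-- Lemma 5.3: under (H1) and (H2), every near field refractor (case `κ < 1`) is Lipschitz
on `Ω̄` with a Lipschitz constant depending only on `κ`, `τ`, `r₀` and `sup_{P ∈ D} |P|`. -/
theorem stmt14 (κ τ r₀ M : ℝ) (hκ0 : 0 < κ) (hκ1 : κ < 1) (hτ0 : 0 < τ) (hττ : τ < 1 - κ)
    (hr0 : 0 < r₀) :
    ∃ L : ℝ, ∀ (n : ℕ), 2 ≤ n → ∀ Ω D : Set (EuclideanSpace ℝ (Fin n)),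
      -- Ω is a domain in the unit sphere
      Ω ⊆ Metric.sphere 0 1 →
      (∃ U : Set (EuclideanSpace ℝ (Fin n)), IsOpen U ∧ Ω = U ∩ Metric.sphere 0 1) →
      -- D is compact, 0 ∉ D, with sup_{P ∈ D} |P| ≤ M
      IsCompact D → D.Nonempty → (0 : EuclideanSpace ℝ (Fin n)) ∉ D →
      (∀ P ∈ D, ‖P‖ ≤ M) →
      -- (H1)
      (∀ x ∈ closure Ω, ∀ P ∈ D, (κ + τ) * ‖P‖ ≤ ⟪x, P⟫) →
      -- (H2)
      r₀ ≤ τ / (1 + κ) * Metric.infDist 0 D →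
      (∀ X ∈ coneQ Ω r₀, ∀ m : EuclideanSpace ℝ (Fin n), ‖m‖ = 1 →
        (D ∩ {Z | ∃ t : ℝ, 0 ≤ t ∧ Z = X + t • m}).Subsingleton) →
      -- conclusion: uniform Lipschitz bound
      ∀ ρ : EuclideanSpace ℝ (Fin n) → ℝ, IsNearFieldRefractorLt κ r₀ Ω D ρ →
        ∀ x ∈ closure Ω, ∀ y ∈ closure Ω, |ρ x - ρ y| ≤ L * ‖x - y‖ :=
  stmt14_general κ τ r₀ M hκ0 hκ1 hτ0 hττ
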